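/- Under the standing setup, there is exactly one prime q_i in S with 2β_i + 1 = ℓ^3, and the other three primes q_i in S satisfy 2β_i + 1 = ℓ^2. -/

import Mathlib

/-!
Write `n i = 2 β i + 1` and `σ i = σ (q i ^ (2 β i)) = ∑ u < n i, q i ^ u`. Comparing `p`-adic
valuations in `σ N = 2 N` gives `∑ i, v_p (σ i) = α ≤ 9`. By lifting the exponent,
`v_p (σ i) = v_p (n i) ≥ 2` when `q i ≡ 1 [MOD p]`, and otherwise `v_p (σ i)` is `0` or at least
`v_p (n i)`.

For every divisor `d` of `n i` with `p ∣ d`, a primitive prime divisor `t` of `q i ^ d - 1`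
(Zsigmondy's theorem, proved below for odd `d` with cyclotomic polynomials) divides `σ i`, hence
`N`, and `t ≡ 1 [MOD p]` because `d ∣ t - 1`. So `t = q j` for some `j ∈ S` other than `i`, and
different `d` give different `j`. There are `v_p (n i)` times as many such `d` as divisors of the
`p`-free part of `n i`, which bounds `v_p (n i)` by `#S` and forces `n i` to be a power of `p`
when `i ∈ S`. Within the budget `α ≤ 9` only indices in `S` can contribute to `α`, each with
`2 ≤ v_p (n i) ≤ #S - 1 ≤ 3`, and `α ≡ 1 [MOD 4]` leaves only `#S = 4` and `α = 2 + 2 + 2 + 3`.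
-/

open Finset Polynomial ArithmeticFunction
open scoped ArithmeticFunction.sigma

theorem geom_sum_range_mul {R : Type*} [CommSemiring R] (x : R) (a b : ℕ) :
    ∑ i ∈ range (a * b), x ^ i = (∑ j ∈ range b, (x ^ a) ^ j) * ∑ i ∈ range a, x ^ i := by
  induction b with
  | zero => simp
  | succ b ih =>
    rw [Nat.mul_succ, sum_range_add, ih, sum_range_succ, add_mul, ← pow_mul]
    simp only [pow_add, ← mul_sum]

theorem ZMod.not_dvd_orderOf {p : ℕ} [hp : Fact p.Prime] {a : ZMod p} (ha : orderOf a ≠ 0) :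
    ¬ p ∣ orderOf a := by
  have ha0 : a ≠ 0 := fun h => ha (by simp [h])
  intro hpa
  have := Nat.le_of_dvd (Nat.pos_of_ne_zero ha) hpa
  have := Nat.le_of_dvd (by have := hp.out.two_le; omega) (ZMod.orderOf_dvd_card_sub_one ha0)
  omega

namespace Nat

section GeomSum

variable {p q n : ℕ} [hp : Fact p.Prime]

theorem padicValNat_geomSum_of_modEq_one (hodd : Odd p) (hq : q ≡ 1 [MOD p]) (hn : n ≠ 0) :
    padicValNat p (∑ i ∈ range n, q ^ i) = padicValNat p n := by
  have hq0 : q ≠ 0 := by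
    rintro rfl
    exact hp.out.one_lt.ne' (Nat.dvd_one.1 (modEq_zero_iff_dvd.1 hq.symm))
  rcases (one_le_iff_ne_zero.2 hq0).eq_or_lt with rfl | hq1
  · simp
  have hpq : p ∣ q - 1 := (modEq_iff_dvd' hq1.le).1 hq.symm
  have hpq' : ¬ p ∣ q := fun h => hp.out.one_lt.ne' (Nat.dvd_one.1 (by
    simpa [Nat.sub_sub_self hq1.le] using Nat.dvd_sub h hpq))
  have hlte := padicValNat.pow_sub_pow hodd hq1 (by simpa using hpq) hpq' hn
  rw [one_pow, ← geom_sum_mul_of_one_le hq1.le, padicValNat.mul (by positivity) (by omega)]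
    at hlte
  omega

theorem orderOf_dvd_of_dvd_geomSum (h : p ∣ ∑ i ∈ range n, q ^ i) :
    orderOf (q : ZMod p) ∣ n := by
  apply orderOf_dvd_of_pow_eq_one
  rw [← ZMod.natCast_eq_zero_iff] at h
  push_cast at h
  rw [← sub_eq_zero, ← geom_sum_mul, h, zero_mul]

theorem dvd_geomSum_of_orderOf_dvd (h : orderOf (q : ZMod p) ∣ n)
    (h1 : orderOf (q : ZMod p) ≠ 1) : p ∣ ∑ i ∈ range n, q ^ i := by
  rw [← ZMod.natCast_eq_zero_iff]
  push_cast
  have hq1 : (q : ZMod p) - 1 ≠ 0 := sub_ne_zero.2 (mt orderOf_eq_one_iff.2 h1)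
  apply (mul_left_inj' hq1).1
  rw [geom_sum_mul, zero_mul, sub_eq_zero, orderOf_dvd_iff_pow_eq_one.1 h]

theorem padicValNat_le_padicValNat_geomSum (hodd : Odd p) (h : p ∣ ∑ i ∈ range n, q ^ i) :
    padicValNat p n ≤ padicValNat p (∑ i ∈ range n, q ^ i) := by
  rcases eq_or_ne n 0 with rfl | hn
  · simp
  obtain ⟨m, hm⟩ := orderOf_dvd_of_dvd_geomSum h
  set e := orderOf (q : ZMod p)
  have he : e ≠ 0 := left_ne_zero_of_mul (hm ▸ hn)
  have hm0 : m ≠ 0 := right_ne_zero_of_mul (hm ▸ hn)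
  have hqe : q ^ e ≡ 1 [MOD p] := by
    rw [← ZMod.natCast_eq_natCast_iff]
    push_cast
    exact pow_orderOf_eq_one _
  rw [hm, geom_sum_range_mul, padicValNat.mul (geom_sum_pos (zero_le _) hm0).ne'
      (geom_sum_pos (zero_le _) he).ne',
    padicValNat_geomSum_of_modEq_one hodd hqe hm0, padicValNat.mul he hm0,
    padicValNat.eq_zero_of_not_dvd (ZMod.not_dvd_orderOf he)]
  omega

theorem ne_pow_of_dvd_geomSum (h : p ∣ ∑ i ∈ range n, q ^ i) (hq : ¬ q ≡ 1 [MOD p]) (k : ℕ) :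
    n ≠ p ^ k := by
  rintro rfl
  obtain ⟨j, -, hj⟩ := (Nat.dvd_prime_pow hp.out).1 (orderOf_dvd_of_dvd_geomSum h)
  have he : orderOf (q : ZMod p) ≠ 0 := by
    rw [hj]
    exact (pow_pos hp.out.pos j).ne'
  rcases j with _ | j
  · apply hq
    rw [← ZMod.natCast_eq_natCast_iff, Nat.cast_one, ← orderOf_eq_one_iff, hj, pow_zero]
  · exact ZMod.not_dvd_orderOf he (hj ▸ dvd_pow_self p (succ_ne_zero j))

end GeomSum

theorem card_divisors_div_prime {p n : ℕ} (hp : p.Prime) (hn : n ≠ 0) (hpn : p ∣ n) :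
    #(n / p).divisors = padicValNat p n * #(n / p ^ padicValNat p n).divisors := by
  have := Fact.mk hp
  have hcop := coprime_ordCompl hp hn
  rw [factorization_def n hp] at hcop
  obtain ⟨b, hb⟩ : ∃ b, padicValNat p n = b + 1 :=
    ⟨_, (Nat.sub_add_cancel (one_le_padicValNat_of_dvd hn hpn)).symm⟩
  have hnp : n / p = p ^ b * (n / p ^ padicValNat p n) := by
    conv_lhs => rw [← Nat.mul_div_cancel' (pow_padicValNat_dvd (p := p) (n := n)), hb,
      pow_succ', mul_assoc, Nat.mul_div_cancel_left _ hp.pos]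
    rw [hb, pow_succ']
  rw [hnp, (hcop.pow_left b).card_divisors_mul, ← sigma_zero_apply,
    sigma_zero_apply_prime_pow hp, hb]

section Cyclotomic

variable {t d q : ℕ} [ht : Fact t.Prime]

theorem orderOf_eq_ordCompl_of_dvd_cyclotomic_eval (hd : d ≠ 0)
    (h : (t : ℤ) ∣ (cyclotomic d ℤ).eval (q : ℤ)) : orderOf (q : ZMod t) = ordCompl[t] d := by
  have : NeZero ((ordCompl[t] d : ℕ) : ZMod t) :=
    NeZero.of_not_dvd (ZMod t) (not_dvd_ordCompl ht.out hd)
  have hroot :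
      (cyclotomic (t ^ d.factorization t * ordCompl[t] d) (ZMod t)).IsRoot (q : ZMod t) := by
    rw [ordProj_mul_ordCompl_eq_self, IsRoot.def, ← map_cyclotomic_int, ← Int.cast_natCast,
      eval_intCast_map, eq_intCast, ZMod.intCast_zmod_eq_zero_iff_dvd]
    exact h
  exact (isRoot_cyclotomic_prime_pow_mul_iff_of_charP.1 hroot).eq_orderOf.symm

theorem orderOf_eq_of_dvd_cyclotomic_eval (hd : ¬ t ∣ d)
    (h : (t : ℤ) ∣ (cyclotomic d ℤ).eval (q : ℤ)) : orderOf (q : ZMod t) = d := by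
  have hd0 : d ≠ 0 := by
    rintro rfl
    exact hd (dvd_zero t)
  rw [orderOf_eq_ordCompl_of_dvd_cyclotomic_eval hd0 h, factorization_eq_zero_of_not_dvd hd,
    pow_zero, Nat.div_one]

theorem lt_of_dvd_cyclotomic_eval (hd : d ≠ 0) (h : (t : ℤ) ∣ (cyclotomic d ℤ).eval (q : ℤ))
    {s : ℕ} (hs : s.Prime) (hsd : s ∣ d) (hst : s ≠ t) : s < t := by
  have hord := orderOf_eq_ordCompl_of_dvd_cyclotomic_eval hd h
  have hm : ordCompl[t] d ≠ 0 := (ordCompl_pos t hd).ne'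
  have hq : (q : ZMod t) ≠ 0 := fun h0 => hm (by rw [← hord, h0]; simp)
  have hsm : s ∣ ordCompl[t] d :=
    dvd_ordCompl_of_dvd_not_dvd hsd fun hts => hst ((prime_dvd_prime_iff_eq ht.out hs).1 hts).symm
  have := le_of_dvd (pos_of_ne_zero hm) hsm
  have := le_of_dvd (by have := ht.out.two_le; omega) (hord ▸ ZMod.orderOf_dvd_card_sub_one hq)
  omega

theorem not_sq_dvd_cyclotomic_eval (hodd : Odd t) (htd : t ∣ d) (hd : d ≠ 0)
    (h : (t : ℤ) ∣ (cyclotomic d ℤ).eval (q : ℤ)) :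
    ¬ (t : ℤ) ^ 2 ∣ (cyclotomic d ℤ).eval (q : ℤ) := by
  obtain ⟨e, rfl⟩ := htd
  have he : e ≠ 0 := right_ne_zero_of_mul hd
  -- `Φ_{te}` divides `(X ^ (t e) - 1) / (X ^ e - 1)`, whose value at `q` has `t`-adic
  -- valuation `1` by lifting the exponent.
  have hpoly : cyclotomic (t * e) ℤ ∣ ∑ u ∈ range t, (X ^ e) ^ u := by
    have h1 := X_pow_sub_one_mul_cyclotomic_dvd_X_pow_sub_one_of_dvd ℤ
      (show e ∈ (t * e).properDivisors from
        mem_properDivisors.2 ⟨dvd_mul_left e t, lt_mul_left (pos_of_ne_zero he) ht.out.one_lt⟩)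
    rwa [mul_comm t e, pow_mul, ← geom_sum_mul (X ^ e : ℤ[X]) t, mul_comm _ (X ^ e - 1 : ℤ[X]),
      mul_dvd_mul_iff_left (by simpa using X_pow_sub_C_ne_zero (pos_of_ne_zero he) (1 : ℤ)),
      mul_comm e t] at h1
  have hqe : q ^ e ≡ 1 [MOD t] := by
    rw [← ZMod.natCast_eq_natCast_iff]
    push_cast
    apply orderOf_dvd_iff_pow_eq_one.1
    rw [orderOf_eq_ordCompl_of_dvd_cyclotomic_eval hd h]
    have := ordCompl_self_pow_mul e 1 ht.out
    rw [pow_one] at this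
    exact this ▸ ordCompl_dvd e t
  intro h2
  have h3 : t ^ 2 ∣ ∑ u ∈ range t, (q ^ e) ^ u := by
    have := h2.trans (eval_dvd hpoly (x := (q : ℤ)))
    simp only [eval_finsetSum, eval_pow, eval_X] at this
    exact_mod_cast this
  rw [padicValNat_dvd_iff_le (geom_sum_pos (zero_le _) ht.out.ne_zero).ne',
    padicValNat_geomSum_of_modEq_one hodd hqe ht.out.ne_zero, padicValNat_self] at h3
  omega

theorem lt_natAbs_cyclotomic_eval (hq : 3 ≤ q) (hd : 1 < d) (htd : t ∣ d) :
    t < ((cyclotomic d ℤ).eval (q : ℤ)).natAbs := by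
  have hφ : t - 1 ≤ φ d := by
    rw [← totient_prime ht.out]
    exact le_of_dvd (totient_pos.2 (by omega)) (totient_dvd_of_dvd htd)
  calc t ≤ 2 ^ (t - 1) := by have := (t - 1).lt_two_pow_self; omega
    _ ≤ 2 ^ φ d := Nat.pow_le_pow_right (by norm_num) hφ
    _ ≤ (q - 1) ^ φ d := Nat.pow_le_pow_left (by omega) _
    _ < _ := sub_one_pow_totient_lt_natAbs_cyclotomic_eval hd (by omega)

end Cyclotomic

/-- Zsigmondy's theorem for odd exponents. -/
theorem exists_prime_orderOf_eq {q d : ℕ} (hq : 3 ≤ q) (hd : Odd d) (hd1 : 1 < d) :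
    ∃ t, t.Prime ∧ orderOf (q : ZMod t) = d := by
  -- A prime factor of `Φ_d(q)` not dividing `d` has order `d`. At most one prime factor of `d`
  -- divides `Φ_d(q)`, and only once, while `Φ_d(q)` exceeds it.
  set Φ := (cyclotomic d ℤ).eval (q : ℤ)
  suffices ∃ t, t.Prime ∧ ¬ t ∣ d ∧ t ∣ Φ.natAbs by
    obtain ⟨t, ht, htd, htΦ⟩ := this
    have := Fact.mk ht
    exact ⟨t, ht, orderOf_eq_of_dvd_cyclotomic_eval htd (Int.natCast_dvd.2 htΦ)⟩
  have hΦ : 1 < Φ.natAbs :=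
    (sub_one_lt_natAbs_cyclotomic_eval hd1 (by omega)).trans_le' (by omega)
  set t := Φ.natAbs.minFac
  have ht : t.Prime := minFac_prime hΦ.ne'
  obtain ⟨c, hc⟩ : t ∣ Φ.natAbs := minFac_dvd _
  by_cases htd : t ∣ d
  swap; · exact ⟨t, ht, htd, hc ▸ dvd_mul_right t c⟩
  have := Fact.mk ht
  have hc1 : 1 < c := by
    have := lt_natAbs_cyclotomic_eval hq hd1 htd
    rw [hc] at this
    by_contra! h
    interval_cases c <;> omega
  set s := c.minFac
  have hs : s.Prime := minFac_prime hc1.ne'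
  have hsΦ : s ∣ Φ.natAbs := hc ▸ (minFac_dvd c).mul_left t
  by_cases hsd : s ∣ d
  swap; · exact ⟨s, hs, hsd, hsΦ⟩
  have htΦ : (t : ℤ) ∣ Φ := Int.natCast_dvd.2 ⟨c, hc⟩
  have hst : s = t := by
    by_contra hst
    have := Fact.mk hs
    exact (lt_of_dvd_cyclotomic_eval (by omega) (Int.natCast_dvd.2 hsΦ) ht htd (Ne.symm hst)).not_gt
      (lt_of_dvd_cyclotomic_eval (by omega) htΦ hs hsd hst)
  refine absurd ?_ (not_sq_dvd_cyclotomic_eval (hd.of_dvd_nat htd) htd (by omega) htΦ)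
  rw [← Nat.cast_pow, Int.natCast_dvd, hc, sq]
  exact mul_dvd_mul_left t (hst ▸ minFac_dvd c)

end Nat

section Counting

variable {ι : Type*}

theorem card_filter_eq_three_and_card_filter_eq_two {T : Finset ι} {a : ι → ℕ} {α : ℕ}
    (hsum : ∑ i ∈ T, a i = α) (hα : α ≤ 9) (hα4 : α % 4 = 1)
    (ha : ∀ i ∈ T, 2 ≤ a i ∧ a i < #T) :
    #(T.filter (a · = 3)) = 1 ∧ #(T.filter (a · = 2)) = 3 := by
  obtain ⟨i, hi⟩ : T.Nonempty := nonempty_of_sum_ne_zero (by rw [hsum]; omega)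
  have hT3 := ha i hi
  have hTle : 2 * #T ≤ α := by
    rw [← hsum, mul_comm, ← smul_eq_mul]
    exact card_nsmul_le_sum T a 2 fun i hi => (ha i hi).1
  have h23 : ∀ i ∈ T, a i = 2 ∨ a i = 3 := fun i hi => by
    have := ha i hi
    omega
  have hsplit : α = 2 * #T + #(T.filter (a · = 3)) := by
    rw [← hsum, card_filter, mul_comm, ← smul_eq_mul, ← sum_const, ← sum_add_distrib]
    exact sum_congr rfl fun i hi => by rcases h23 i hi with h | h <;> simp [h]
  have hpart : #(T.filter (a · = 2)) + #(T.filter (a · = 3)) = #T := by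
    rw [← card_filter_add_card_filter_not (s := T) (p := (a · = 2))]
    congr 2
    exact filter_congr fun i hi => by rcases h23 i hi with h | h <;> simp [h]
  have h4 : #(T.filter (a · = 3)) ≠ 0 → 4 ≤ #T := fun h => by
    obtain ⟨j, hj⟩ := card_ne_zero.1 h
    have := ha j (mem_filter.1 hj).1
    have := (mem_filter.1 hj).2
    omega
  omega

variable [Fintype ι] [DecidableEq ι]

/-- `v i` and `a i` stand for the `p`-adic valuations of `σ (q i ^ k i)` and of
`k i + 1`, and `c i` is the number of divisors of the `p`-free part of `k i + 1`. -/
theorem sum_eq_and_forall_of_valuation_budget {α : ℕ} {T : Finset ι} {a c v : ι → ℕ}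
    (hsum : ∑ i, v i = α) (hα : α ≤ 9) (ha : ∀ i, 2 ≤ a i) (hc : ∀ i, c i ≠ 0)
    (hcount : ∀ i, a i * c i ≤ #(T.erase i)) (hvT : ∀ i ∈ T, v i = a i)
    (hvT' : ∀ i ∉ T, v i ≠ 0 → a i ≤ v i ∧ 2 ≤ c i) :
    ∑ i ∈ T, a i = α ∧ ∀ i ∈ T, c i = 1 ∧ a i < #T := by
  have hTv : 2 * #T ≤ ∑ i ∈ T, v i := by
    rw [mul_comm, ← smul_eq_mul]
    exact card_nsmul_le_sum T v 2 fun i hi => hvT i hi ▸ ha i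
  have hvanish : ∀ i ∉ T, v i = 0 := by
    intro i hi
    by_contra hv
    obtain ⟨hav, hc2⟩ := hvT' i hi hv
    have hT4 : 4 ≤ #T := by
      have := Nat.mul_le_mul (ha i) hc2
      have := hcount i
      rw [erase_eq_of_notMem hi] at this
      omega
    have : ∑ j ∈ insert i T, v j ≤ α := hsum ▸ sum_le_sum_of_subset (subset_univ _)
    rw [sum_insert hi] at this
    have := ha i
    omega
  have hsumT : ∑ i ∈ T, a i = α := by
    rw [← hsum, ← sum_subset (subset_univ T) fun i _ hi => hvanish i hi]
    exact sum_congr rfl fun i hi => (hvT i hi).symm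
  refine ⟨hsumT, fun i hi => ?_⟩
  have hcard := hcount i
  rw [card_erase_of_mem hi] at hcard
  have hci : c i = 1 := by
    by_contra h
    have := Nat.mul_le_mul (ha i) (show 2 ≤ c i by have := hc i; omega)
    have : ∑ i ∈ T, v i = ∑ i ∈ T, a i := sum_congr rfl hvT
    omega
  rw [hci, mul_one] at hcard
  exact ⟨hci, by have := card_pos.2 ⟨i, hi⟩; omega⟩

theorem card_filter_eq_pow_three_and_card_filter_eq_pow_two {p α : ℕ} {T : Finset ι}
    {n v : ι → ℕ} (hp : p.Prime) (hsum : ∑ i, v i = α) (hα : α ≤ 9) (hα4 : α % 4 = 1)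
    (hn0 : ∀ i, n i ≠ 0) (hn : ∀ i, p ^ 2 ∣ n i)
    (hcount : ∀ i, #(n i / p).divisors ≤ #(T.erase i))
    (hvT : ∀ i ∈ T, v i = padicValNat p (n i))
    (hvT' : ∀ i ∉ T, v i ≠ 0 → padicValNat p (n i) ≤ v i ∧ ∀ k, n i ≠ p ^ k) :
    #(T.filter (n · = p ^ 3)) = 1 ∧ #(T.filter (n · = p ^ 2)) = 3 := by
  have := Fact.mk hp
  set a := fun i => padicValNat p (n i)
  set m := fun i => n i / p ^ a i
  have ha : ∀ i, 2 ≤ a i := fun i => (padicValNat_dvd_iff_le (hn0 i)).1 (hn i)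
  have hnm : ∀ i, n i = p ^ a i * m i := fun i =>
    (Nat.mul_div_cancel' pow_padicValNat_dvd).symm
  have hm0 : ∀ i, #(m i).divisors ≠ 0 := fun i =>
    (card_pos.2 (Nat.nonempty_divisors.2 fun h => hn0 i (by rw [hnm i, h, mul_zero]))).ne'
  have hm2 : ∀ i ∉ T, v i ≠ 0 → 2 ≤ #(m i).divisors := fun i hi hv => by
    have := (Nat.divisors_card_eq_one_iff (m i)).not.2 fun h =>
      (hvT' i hi hv).2 (a i) (by rw [hnm i, h, mul_one])
    have := hm0 i
    omega
  obtain ⟨hsumT, hT⟩ := sum_eq_and_forall_of_valuation_budget (c := fun i => #(m i).divisors)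
    hsum hα ha hm0
    (fun i => Nat.card_divisors_div_prime hp (hn0 i) ((dvd_pow_self p two_ne_zero).trans (hn i))
      ▸ hcount i)
    hvT fun i hi hv => ⟨(hvT' i hi hv).1, hm2 i hi hv⟩
  obtain ⟨h3, h2⟩ := card_filter_eq_three_and_card_filter_eq_two hsumT hα hα4
    fun i hi => ⟨ha i, (hT i hi).2⟩
  have hpow : ∀ i ∈ T, ∀ k, n i = p ^ k ↔ a i = k := fun i hi k => by
    rw [hnm i, (Nat.divisors_card_eq_one_iff _).1 (hT i hi).1, mul_one,
      (Nat.pow_right_injective hp.two_le).eq_iff]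
  exact ⟨h3 ▸ congrArg card (filter_congr fun i hi => hpow i hi 3),
    h2 ▸ congrArg card (filter_congr fun i hi => hpow i hi 2)⟩

end Counting

section PerfectPowProd

variable {ι : Type*} [Fintype ι] {N p α : ℕ} {q k : ι → ℕ}

theorem sigma_one_pow_mul_prod_pow (hp : p.Prime) (hq : ∀ i, (q i).Prime)
    (hinj : Function.Injective q) (hpq : ∀ i, p ≠ q i) :
    σ 1 (p ^ α * ∏ i, q i ^ k i) =
      (∑ u ∈ range (α + 1), p ^ u) * ∏ i, ∑ u ∈ range (k i + 1), q i ^ u := by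
  have hcop : Nat.Coprime (p ^ α) (∏ i, q i ^ k i) :=
    Nat.Coprime.pow_left _ <| Nat.Coprime.prod_right fun i _ =>
      Nat.Coprime.pow_right _ ((Nat.coprime_primes hp (hq i)).2 (hpq i))
  have hpair : ((univ : Finset ι) : Set ι).Pairwise
      (Function.onFun Nat.Coprime fun i => q i ^ k i) := fun i _ j _ hij =>
    Nat.Coprime.pow _ _ ((Nat.coprime_primes (hq i) (hq j)).2 (hinj.ne hij))
  rw [isMultiplicative_sigma.map_mul_of_coprime hcop,
    isMultiplicative_sigma.map_prod _ _ hpair, sigma_one_apply_prime_pow hp]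
  simp only [sigma_one_apply_prime_pow (hq _)]

theorem eq_or_exists_eq_of_prime_dvd_geomSum (hN : N = p ^ α * ∏ i, q i ^ k i)
    (hperf : σ 1 N = 2 * N) (hp : p.Prime) (hq : ∀ i, (q i).Prime)
    (hinj : Function.Injective q) (hpq : ∀ i, p ≠ q i) {t : ℕ} (ht : t.Prime) (ht2 : t ≠ 2)
    {i : ι} (hti : t ∣ ∑ u ∈ range (k i + 1), q i ^ u) : t = p ∨ ∃ j, t = q j := by
  have htσ : t ∣ 2 * N := by
    rw [← hperf, hN, sigma_one_pow_mul_prod_pow hp hq hinj hpq]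
    exact (hti.trans (dvd_prod_of_mem (fun j => ∑ u ∈ range (k j + 1), q j ^ u)
      (mem_univ i))).mul_left _
  have htN : t ∣ p ^ α * ∏ i, q i ^ k i := hN ▸ (ht.dvd_mul.1 htσ).resolve_left fun h =>
    ht2 ((Nat.prime_dvd_prime_iff_eq ht Nat.prime_two).1 h)
  rcases ht.dvd_mul.1 htN with h | h
  · exact .inl ((Nat.prime_dvd_prime_iff_eq ht hp).1 (ht.dvd_of_dvd_pow h))
  · obtain ⟨j, -, hj⟩ := (Prime.dvd_finsetProd_iff ht.prime _).1 h
    exact .inr ⟨j, (Nat.prime_dvd_prime_iff_eq ht (hq j)).1 (ht.dvd_of_dvd_pow hj)⟩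

theorem sum_padicValNat_geomSum_eq (hN : N = p ^ α * ∏ i, q i ^ k i)
    (hperf : σ 1 N = 2 * N) (hp : p.Prime) (hpodd : Odd p) (hq : ∀ i, (q i).Prime)
    (hinj : Function.Injective q) (hpq : ∀ i, p ≠ q i) :
    ∑ i, padicValNat p (∑ u ∈ range (k i + 1), q i ^ u) = α := by
  have hσ := sigma_one_pow_mul_prod_pow (α := α) (k := k) hp hq hinj hpq
  rw [← hN, hperf] at hσ
  have hgeom : ∀ {x n : ℕ}, ∑ u ∈ range (n + 1), x ^ u ≠ 0 :=
    (geom_sum_pos (Nat.zero_le _) (Nat.succ_ne_zero _)).ne'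
  have hprod : ∏ i, q i ^ k i ≠ 0 := prod_ne_zero_iff.2 fun i _ => pow_ne_zero _ (hq i).ne_zero
  have hN0 : N ≠ 0 := hN ▸ mul_ne_zero (pow_ne_zero _ hp.ne_zero) hprod
  have hvN : N.factorization p = α := by
    rw [hN, Nat.factorization_mul (pow_ne_zero _ hp.ne_zero) hprod,
      Nat.factorization_prod fun i _ => pow_ne_zero _ (hq i).ne_zero]
    simp [hp.factorization, (hq _).factorization, (hpq _).symm]
  have hv2 : (2 : ℕ).factorization p = 0 := Nat.factorization_eq_zero_of_not_dvd fun h => by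
    have := (Nat.prime_dvd_prime_iff_eq hp Nat.prime_two).1 h ▸ hpodd
    contradiction
  have hvp : (∑ u ∈ range (α + 1), p ^ u).factorization p = 0 := by
    refine Nat.factorization_eq_zero_of_not_dvd fun h => hp.one_lt.ne' (Nat.dvd_one.1 ?_)
    rw [sum_range_succ', pow_zero] at h
    exact (Nat.dvd_add_right (dvd_sum fun u _ => dvd_pow_self p (Nat.succ_ne_zero u))).1 h
  apply_fun (·.factorization p) at hσ
  rw [Nat.factorization_mul two_ne_zero hN0,
    Nat.factorization_mul hgeom (prod_ne_zero_iff.2 fun i _ => hgeom),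
    Nat.factorization_prod fun i _ => hgeom] at hσ
  simp only [Finsupp.add_apply, Finsupp.finsetSum_apply, hv2, hvp, hvN,
    Nat.factorization_def _ hp] at hσ
  omega

theorem card_divisors_div_le_card_erase [DecidableEq ι] {n : ℕ} {i : ι} (hp : p.Prime)
    (hqi : 3 ≤ q i) (hn : Odd n) (hpn : p ∣ n)
    (hclosed : ∀ t, t.Prime → t ≠ 2 → t ∣ ∑ u ∈ range n, q i ^ u → t = p ∨ ∃ j, t = q j) :
    #(n / p).divisors ≤ #((univ.filter fun j => q j ≡ 1 [MOD p]).erase i) := by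
  -- The injection `e ↦ j`: modulo the prime `q j`, `q i` has order `p * e`.
  have hdemand : ∀ e ∈ (n / p).divisors, ∃ j ∈ (univ.filter fun j => q j ≡ 1 [MOD p]).erase i,
      orderOf (q i : ZMod (q j)) = p * e := by
    intro e he
    have he0 : 0 < e := Nat.pos_of_mem_divisors he
    have hdn : p * e ∣ n := Nat.mul_dvd_of_dvd_div hpn (Nat.dvd_of_mem_divisors he)
    have hpe : p ≤ p * e := Nat.le_mul_of_pos_right p he0
    have hp2 := hp.two_le
    obtain ⟨t, ht, hord⟩ := Nat.exists_prime_orderOf_eq hqi (hn.of_dvd_nat hdn) (by omega)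
    have := Fact.mk ht
    have hq0 : (q i : ZMod t) ≠ 0 := fun h => by simp [h] at hord; omega
    have hdt : p * e ∣ t - 1 := hord ▸ ZMod.orderOf_dvd_card_sub_one hq0
    have hle : p * e ≤ t - 1 := Nat.le_of_dvd (by have := ht.two_le; omega) hdt
    have hti : t ∣ ∑ u ∈ range n, q i ^ u :=
      Nat.dvd_geomSum_of_orderOf_dvd (hord ▸ hdn) (by omega)
    rcases hclosed t ht (by omega) hti with rfl | ⟨j, rfl⟩
    · omega
    · refine ⟨j, mem_erase.2 ⟨?_, mem_filter.2 ⟨mem_univ j, ?_⟩⟩, hord⟩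
      · rintro rfl
        exact hq0 (ZMod.natCast_self _)
      · exact ((Nat.modEq_iff_dvd' ht.one_lt.le).2 ((dvd_mul_right p e).trans hdt)).symm
  have : Nonempty ι := ⟨i⟩
  choose! f hf using hdemand
  refine card_le_card_of_injOn f (fun e he => (hf e he).1) fun e he e' he' hee => ?_
  exact Nat.eq_of_mul_eq_mul_left hp.pos ((hf e he).2.symm.trans (hee ▸ (hf e' he').2))

end PerfectPowProd

theorem exponents_in_S_general
    (N p α s : ℕ) (q β : Fin s → ℕ)
    (hN : N = p ^ α * ∏ i, q i ^ (2 * β i))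
    (hperf : ArithmeticFunction.sigma 1 N = 2 * N)
    (hp : p.Prime) (hpodd : Odd p)
    (hq : ∀ i, (q i).Prime) (hqodd : ∀ i, Odd (q i))
    (hinj : Function.Injective q)
    (hpq : ∀ i, p ≠ q i)
    (hα4 : α % 4 = 1)
    (hk : ∀ i, p ^ 2 ∣ 2 * β i + 1)
    (hnd : ¬ p ^ 10 ∣ N)
    (T : Finset (Fin s))
    (hTdef : T = Finset.univ.filter fun i => q i ≡ 1 [MOD p]) :
    (T.filter fun i => 2 * β i + 1 = p ^ 3).card = 1 ∧
    (T.filter fun i => 2 * β i + 1 = p ^ 2).card = 3 := by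
  have := Fact.mk hp
  have hq3 : ∀ i, 3 ≤ q i := fun i =>
    (hq i).two_le.lt_of_ne' fun h => Nat.not_odd_iff_even.2 even_two (h ▸ hqodd i)
  have hα : α ≤ 9 := by
    by_contra h
    exact hnd ((pow_dvd_pow p (by omega)).trans (hN ▸ dvd_mul_right _ _))
  subst hTdef
  refine card_filter_eq_pow_three_and_card_filter_eq_pow_two hp
    (sum_padicValNat_geomSum_eq hN hperf hp hpodd hq hinj hpq) hα hα4 (fun i => by omega) hk
    (fun i => card_divisors_div_le_card_erase hp (hq3 i) (odd_two_mul_add_one _)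
      ((dvd_pow_self p two_ne_zero).trans (hk i))
      fun t ht ht2 hti => eq_or_exists_eq_of_prime_dvd_geomSum hN hperf hp hq hinj hpq ht ht2 hti)
    (fun i hi => Nat.padicValNat_geomSum_of_modEq_one hpodd (mem_filter.1 hi).2 (by omega))
    fun i hi hv => ?_
  have hpi := dvd_of_one_le_padicValNat (Nat.one_le_iff_ne_zero.2 hv)
  exact ⟨Nat.padicValNat_le_padicValNat_geomSum hpodd hpi,
    Nat.ne_pow_of_dvd_geomSum hpi fun h => hi (mem_filter.2 ⟨mem_univ i, h⟩)⟩

theorem exponents_in_S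
    (N p α s : ℕ) (q β : Fin s → ℕ)
    (hN : N = p ^ α * ∏ i, q i ^ (2 * β i))
    (hodd : Odd N)
    (hperf : ArithmeticFunction.sigma 1 N = 2 * N)
    (hp : p.Prime) (hpodd : Odd p)
    (hq : ∀ i, (q i).Prime) (hqodd : ∀ i, Odd (q i))
    (hinj : Function.Injective q)
    (hpq : ∀ i, p ≠ q i)
    (hα4 : α % 4 = 1) (hp4 : p % 4 = 1)
    (hαpos : 0 < α) (hβpos : ∀ i, 0 < β i)
    (hk : ∀ i, p ^ 2 ∣ 2 * β i + 1)
    (hnd : ¬ p ^ 10 ∣ N)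
    (T : Finset (Fin s))
    (hTdef : T = Finset.univ.filter fun i => q i ≡ 1 [MOD p]) :
    (T.filter fun i => 2 * β i + 1 = p ^ 3).card = 1 ∧
    (T.filter fun i => 2 * β i + 1 = p ^ 2).card = 3 :=
  exponents_in_S_general N p α s q β hN hperf hp hpodd hq hqodd hinj hpq hα4 hk hnd T hTdef
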